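/- arXiv:2108.03748 — 8 statements merged into one kernel-verified Lean document; each statement's English description precedes it below -/
import Mathlib

section
/- Let M and N be right modules over a ring S, let E = End_S(N), and suppose sr(E) = 1. Let f : M → N be S-linear. Then the left E-submodule Ef of Hom_S(M,N) contains a split surjection if and only if f itself is a split surjection (i.e., there exists an S-linear g : N → M with f ∘ g = id_N). -/
/-!
Stable rank 1, applied to a unimodular pair `(b, 0)`, makes every left-invertible element of `E`
a unit, so `E` is Dedekind-finite. If `(e f) g = 1` then `f g` is left-invertible in `E`, hence a
unit, and `g (f g)⁻¹` is a right inverse of `f`.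
-/

theorem IsDedekindFiniteMonoid.of_stableRank_one {R : Type*} [Ring R]
    (hsr1 : ∀ a b : R, (∃ x y : R, x * a + y * b = 1) → ∃ c : R, IsUnit (a + c * b)) :
    IsDedekindFiniteMonoid R where
  mul_eq_one_symm {a b} hab := by
    obtain ⟨c, hb⟩ := hsr1 b 0 ⟨a, 0, by rw [hab, zero_mul, add_zero]⟩
    rw [mul_zero, add_zero] at hb
    obtain ⟨u, rfl⟩ := hb
    rw [Units.mul_eq_one_iff_eq_inv.mp hab, Units.mul_inv]

theorem LinearMap.exists_comp_eq_id_of_isUnit_comp {S M N : Type*} [Semiring S]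
    [AddCommMonoid M] [Module S M] [AddCommMonoid N] [Module S N]
    {f : M →ₗ[S] N} {g : N →ₗ[S] M} (h : IsUnit (f ∘ₗ g : Module.End S N)) :
    ∃ g' : N →ₗ[S] M, f ∘ₗ g' = LinearMap.id :=
  ⟨g ∘ₗ h.unit⁻¹.val, h.mul_val_inv⟩

/-- If E = End_S(N) has stable rank 1, then Ef contains a split surjection
iff f is a split surjection. -/
theorem split_in_Ef_iff_split (S : Type*) [Ring S]
    (M N : Type*) [AddCommGroup M] [Module S M] [AddCommGroup N] [Module S N]
    (hsr1 : ∀ a b : Module.End S N, (∃ x y : Module.End S N, x * a + y * b = 1) →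
      ∃ c : Module.End S N, IsUnit (a + c * b))
    (f : M →ₗ[S] N) :
    (∃ (e : Module.End S N) (g : N →ₗ[S] M), (e ∘ₗ f) ∘ₗ g = LinearMap.id) ↔
      ∃ g : N →ₗ[S] M, f ∘ₗ g = LinearMap.id := by
  have := IsDedekindFiniteMonoid.of_stableRank_one hsr1
  constructor
  · rintro ⟨e, g, hg⟩
    exact LinearMap.exists_comp_eq_id_of_isUnit_comp (IsUnit.of_mul_eq_one_right e hg)
  · rintro ⟨g, hg⟩
    exact ⟨1, g, hg⟩
end

section
/- Every unit-regular ring has stable rank 1. -/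
/-!
Write `a = a u a` with `u` a unit, so that `e = u a` is idempotent and `a = u⁻¹ e`. Given
`x a + y b = 1`, right multiplication by `1 - e` kills `a`, so `y b (1 - e) = 1 - e`. Then
`e + (1 - e) y b = 1 + (1 - e) y b e` is a unit, the added term having square zero, and
`a + u⁻¹ (1 - e) y b = u⁻¹ (e + (1 - e) y b)`.
-/

section

variable {R : Type*} [Ring R]

theorem IsIdempotentElem.isUnit_add_one_sub_mul {e r : R} (he : IsIdempotentElem e)
    (h : (1 - e) * r * (1 - e) = 1 - e) : IsUnit (e + (1 - e) * r) := by
  have hsum : e + (1 - e) * r = 1 + (1 - e) * r * e := by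
    calc e + (1 - e) * r = e + ((1 - e) * r * e + (1 - e) * r * (1 - e)) := by noncomm_ring
      _ = 1 + (1 - e) * r * e := by rw [h]; noncomm_ring
  have hsq : ((1 - e) * r * e) ^ 2 = 0 := by
    calc ((1 - e) * r * e) ^ 2 = (1 - e) * r * (e * (1 - e)) * r * e := by noncomm_ring
      _ = 0 := by rw [he.mul_one_sub_self]; noncomm_ring
  rw [hsum]
  exact IsNilpotent.isUnit_one_add ⟨2, hsq⟩

theorem IsIdempotentElem.one_sub_mul_mul_one_sub_eq {e a b x y : R} (he : IsIdempotentElem e)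
    (hae : a * (1 - e) = 0) (hxy : x * a + y * b = 1) :
    (1 - e) * (y * b) * (1 - e) = 1 - e := by
  calc (1 - e) * (y * b) * (1 - e) = (1 - e) * (1 - x * a) * (1 - e) := by
        rw [← hxy, add_sub_cancel_left]
    _ = (1 - e) * (1 - e) - (1 - e) * x * (a * (1 - e)) := by noncomm_ring
    _ = 1 - e := by rw [hae, he.one_sub.eq]; noncomm_ring

theorem isIdempotentElem_unit_mul_of_eq_mul_mul {a : R} {u : Rˣ} (hu : a = a * u * a) :
    IsIdempotentElem (u * a) := by
  calc (u : R) * a * (u * a) = u * (a * u * a) := by noncomm_ring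
    _ = u * a := by rw [← hu]

end

/-- Every unit-regular ring has stable rank 1. -/
theorem unitRegular_stableRankOne (E : Type*) [Ring E]
    (hur : ∀ a : E, ∃ u : Eˣ, a = a * u * a) :
    ∀ a b : E, (∃ x y : E, x * a + y * b = 1) → ∃ c : E, IsUnit (a + c * b) := by
  rintro a b ⟨x, y, hxy⟩
  obtain ⟨u, hu⟩ := hur a
  have he := isIdempotentElem_unit_mul_of_eq_mul_mul hu
  have hae : a * (1 - u * a) = 0 := by
    rw [mul_sub, mul_one, ← mul_assoc, ← hu, sub_self]
  have hunit : IsUnit (u * a + (1 - u * a) * (y * b)) :=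
    he.isUnit_add_one_sub_mul (he.one_sub_mul_mul_one_sub_eq hae hxy)
  refine ⟨u⁻¹ * (1 - u * a) * y, ?_⟩
  have hfactor : a + u⁻¹ * (1 - u * a) * y * b = u⁻¹ * (u * a + (1 - u * a) * (y * b)) := by
    rw [mul_add, ← mul_assoc, Units.inv_mul, one_mul]; noncomm_ring
  rw [hfactor]
  exact u⁻¹.isUnit.mul hunit
end

section
/- Let E be a unit-regular ring and let a, b, c ∈ E satisfy aE + bE = E = Eb + Ec. Then there exists d ∈ E such that, for every central unit s of E, the element b + a·d·s·c is a unit of E. -/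
/-!
Write `b = b u b` with `u` a unit, so that `e = b u` and `f = u b` are idempotents. If
`a x + b y = 1` and `g b + h c = 1`, take `d = x (1 - e) u⁻¹ h`. Then for central `s`
  `b + a d s c = (e + a x (1 - e)) u⁻¹ (f + (1 - f) s h c)`.
The first factor is triangular with respect to `e`, with diagonal `e + (1 - e) a x (1 - e) = 1`;
the last one is triangular with respect to `f`, with diagonal `f + s (1 - f)`, a unit because `s`
is a central unit. A triangular element with invertible diagonal is a unit, since its
off-diagonal corner squares to zero.
-/

namespace IsIdempotentElem

variable {R : Type*} [Ring R] {p : R}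

theorem isUnit_one_add_mul_mul_one_sub (hp : IsIdempotentElem p) (y : R) :
    IsUnit (1 + p * y * (1 - p)) :=
  IsNilpotent.isUnit_one_add ⟨2, by
    rw [pow_two, show p * y * (1 - p) * (p * y * (1 - p)) = p * y * ((1 - p) * p) * y * (1 - p) by
      noncomm_ring, hp.one_sub_mul_self, mul_zero, zero_mul, zero_mul]⟩

theorem isUnit_one_add_one_sub_mul_mul (hp : IsIdempotentElem p) (y : R) :
    IsUnit (1 + (1 - p) * y * p) := by
  simpa only [sub_sub_cancel] using hp.one_sub.isUnit_one_add_mul_mul_one_sub y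

theorem isUnit_add_one_sub_mul_s3 (hp : IsIdempotentElem p) {y : R}
    (h : IsUnit (p + (1 - p) * y * (1 - p))) : IsUnit (p + (1 - p) * y) := by
  have hfactor : (1 + (1 - p) * y * p) * (p + (1 - p) * y * (1 - p)) = p + (1 - p) * y := by
    calc (1 + (1 - p) * y * p) * (p + (1 - p) * y * (1 - p))
        = p + (1 - p) * y * (p * p) + (1 - p) * y * (1 - p)
          + (1 - p) * y * (p * (1 - p)) * y * (1 - p) := by noncomm_ring
      _ = p + (1 - p) * y := by rw [hp.eq, hp.mul_one_sub_self]; noncomm_ring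
  rw [← hfactor]
  exact (hp.isUnit_one_add_one_sub_mul_mul y).mul h

theorem isUnit_add_mul_one_sub (hp : IsIdempotentElem p) {y : R}
    (h : IsUnit (p + (1 - p) * y * (1 - p))) : IsUnit (p + y * (1 - p)) := by
  have hfactor : (p + (1 - p) * y * (1 - p)) * (1 + p * y * (1 - p)) = p + y * (1 - p) := by
    calc (p + (1 - p) * y * (1 - p)) * (1 + p * y * (1 - p))
        = p + (p * p) * y * (1 - p) + (1 - p) * y * (1 - p)
          + (1 - p) * y * ((1 - p) * p) * y * (1 - p) := by noncomm_ring
      _ = p + y * (1 - p) := by rw [hp.eq, hp.one_sub_mul_self]; noncomm_ring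
  rw [← hfactor]
  exact h.mul (hp.isUnit_one_add_mul_mul_one_sub y)

theorem isUnit_add_mul_one_sub_of_commute (hp : IsIdempotentElem p) {s : R} (hs : IsUnit s)
    (hsp : Commute s p) : IsUnit (p + s * (1 - p)) := by
  have hinv : ∀ s t : R, Commute t p → s * t = 1 →
      (p + s * (1 - p)) * (p + t * (1 - p)) = 1 := by
    intro s t htp hst
    calc (p + s * (1 - p)) * (p + t * (1 - p))
        = p * p + (p * t) * (1 - p) + s * ((1 - p) * p) + s * ((1 - p) * t) * (1 - p) := by
          noncomm_ring
      _ = p * p + t * (p * (1 - p)) + s * ((1 - p) * p) + s * (t * (1 - p)) * (1 - p) := by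
          rw [← htp.eq, ((Commute.one_right t).sub_right htp).eq]; noncomm_ring
      _ = p + s * t * ((1 - p) * (1 - p)) := by
          rw [hp.eq, hp.mul_one_sub_self, hp.one_sub_mul_self]; noncomm_ring
      _ = 1 := by rw [hst, hp.one_sub.eq]; noncomm_ring
  obtain ⟨u, rfl⟩ := hs
  exact isUnit_iff_exists.mpr ⟨p + ↑u⁻¹ * (1 - p), hinv _ _ hsp.units_inv_left u.mul_inv,
    hinv _ _ hsp u.inv_mul⟩

end IsIdempotentElem

section InnerInverse

variable {R : Type*} [Ring R] {b : R} {u : Rˣ}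

theorem isIdempotentElem_mul_of_mul_mul_eq (hb : b * u * b = b) : IsIdempotentElem (b * u) := by
  rw [IsIdempotentElem, ← mul_assoc, hb]

theorem isIdempotentElem_mul_of_mul_mul_eq' (hb : b * u * b = b) : IsIdempotentElem (u * b) := by
  rw [IsIdempotentElem, mul_assoc, ← mul_assoc b, hb]

theorem one_sub_mul_eq_of_add_eq_one (hb : b * u * b = b) {a x y : R} (h : a * x + b * y = 1) :
    (1 - b * u) * (a * x) = 1 - b * u := by
  calc (1 - b * u) * (a * x) = (1 - b * u) * (a * x + b * y) - (b - b * u * b) * y := by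
        noncomm_ring
    _ = 1 - b * u := by rw [h, hb, sub_self, zero_mul, mul_one, sub_zero]

theorem mul_one_sub_eq_of_add_eq_one (hb : b * u * b = b) {g h c : R} (hgh : g * b + h * c = 1) :
    h * c * (1 - u * b) = 1 - u * b := by
  calc h * c * (1 - u * b) = (g * b + h * c) * (1 - u * b) - g * (b - b * u * b) := by
        noncomm_ring
    _ = 1 - u * b := by rw [hgh, hb, sub_self, mul_zero, one_mul, sub_zero]

theorem add_mul_mul_eq_mul_mul (hb : b * u * b = b) (A C : R) :
    b + A * (1 - b * u) * ↑u⁻¹ * C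
      = (b * u + A * (1 - b * u)) * ↑u⁻¹ * (u * b + (1 - u * b) * C) := by
  have hb' : b * (u * b) = b := by rw [← mul_assoc, hb]
  have hb'' : ∀ z, b * (u * (b * z)) = b * z := fun z => by rw [← mul_assoc, ← mul_assoc, hb]
  simp only [mul_add, add_mul, mul_sub, sub_mul, mul_one, one_mul, mul_assoc,
    Units.mul_inv_cancel_left, Units.inv_mul_cancel_left, hb', hb'']
  abel

theorem isUnit_add_mul_mul_of_mul_mul_eq (hb : b * u * b = b) {A C s : R}
    (hA : (1 - b * u) * A = 1 - b * u) (hC : C * (1 - u * b) = 1 - u * b)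
    (hs : IsUnit s) (hsc : s ∈ Set.center R) :
    IsUnit (b + A * (1 - b * u) * ↑u⁻¹ * (s * C)) := by
  have he := isIdempotentElem_mul_of_mul_mul_eq hb
  have hf := isIdempotentElem_mul_of_mul_mul_eq' hb
  have hcomm : ∀ z, Commute s z := (Set.mem_center_iff.mp hsc).comm
  have hdiag : (1 - u * b) * (s * C) * (1 - u * b) = s * (1 - u * b) := by
    calc (1 - u * b) * (s * C) * (1 - u * b) = ((1 - u * b) * s) * (C * (1 - u * b)) := by
          noncomm_ring
      _ = s * (1 - u * b) := by rw [hC, ← (hcomm _).eq, mul_assoc, hf.one_sub.eq]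
  rw [add_mul_mul_eq_mul_mul hb]
  refine ((he.isUnit_add_mul_one_sub ?_).mul u⁻¹.isUnit).mul (hf.isUnit_add_one_sub_mul_s3 ?_)
  · rw [hA, he.one_sub.eq, add_sub_cancel]
    exact isUnit_one
  · rw [hdiag]
    exact hf.isUnit_add_mul_one_sub_of_commute hs (hcomm _)

end InnerInverse

/-- Lemma: in a unit-regular ring, if aE + bE = E = Eb + Ec, then there is d such
that b + a*d*s*c is a unit for every central unit s. -/
theorem unitRegular_unit_perturbation (E : Type*) [Ring E]
    (hur : ∀ x : E, ∃ v : Eˣ, x = x * v * x)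
    (a b c : E)
    (h1 : ∃ e f : E, a * e + b * f = 1)
    (h2 : ∃ g h : E, g * b + h * c = 1) :
    ∃ d : E, ∀ s : E, IsUnit s → s ∈ Set.center E → IsUnit (b + a * d * s * c) := by
  obtain ⟨u, hu⟩ := hur b
  obtain ⟨x, y, hxy⟩ := h1
  obtain ⟨g, h, hgh⟩ := h2
  refine ⟨x * (1 - b * u) * ↑u⁻¹ * h, fun s hs hsc => ?_⟩
  have hsh : h * s = s * h := ((Set.mem_center_iff.mp hsc).comm h).eq.symm
  have hT : b + a * (x * (1 - b * u) * ↑u⁻¹ * h) * s * c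
      = b + (a * x) * (1 - b * u) * ↑u⁻¹ * (s * (h * c)) := by
    rw [show a * (x * (1 - b * u) * ↑u⁻¹ * h) * s * c = a * x * (1 - b * u) * ↑u⁻¹ * (h * s) * c by
      noncomm_ring, hsh]
    noncomm_ring
  rw [hT]
  exact isUnit_add_mul_mul_of_mul_mul_eq hu.symm (one_sub_mul_eq_of_add_eq_one hu.symm hxy)
    (mul_one_sub_eq_of_add_eq_one hu.symm hgh) hs hsc
end

section
/- Let E be a ring such that E/Jac(E) is unit-regular, and let a, b, c ∈ E satisfy aE + bE = E = Eb + Ec. Then there exists d ∈ E such that, for every central unit s of E, the element b + a·d·s·c is a unit of E. -/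
/-!
Work in `R = E / Jac(E)`, where `b * v * b = b` for a unit `v`. The idempotents `n = 1 - b * v`
and `q = 1 - v * b` satisfy `n * b = 0 = b * q`, and `v * (b + n * v⁻¹ * q * s) = 1 + q * (s - 1)`
is a unit for every central unit `s`. The comaximality relations give `n * (a * e) = n` and
`(h * c) * q = q`, so `b + a * (e * n * v⁻¹ * q * h) * s * c` is that unit multiplied on either
side by units of the form `1 + (nilpotent)`. Units of `E / Jac(E)` lift to units of `E`.
-/

theorem map_mem_center_of_surjective {F M N : Type*} [Semigroup M] [Semigroup N] [FunLike F M N]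
    [MulHomClass F M N] {f : F} (hf : Function.Surjective f) {z : M} (hz : z ∈ Set.center M) :
    f z ∈ Set.center N := by
  rw [Semigroup.mem_center_iff] at hz ⊢
  intro g
  obtain ⟨x, rfl⟩ := hf g
  rw [← map_mul, hz, map_mul]

namespace Ring

variable {R : Type*} [Ring R]

theorem isUnit_one_add_of_mem_jacobson {j : R} (hj : j ∈ jacobson R) : IsUnit (1 + j) := by
  rw [← Ideal.jacobson_bot] at hj
  obtain ⟨z, hz⟩ := Ideal.mem_jacobson_iff.mp hj 1
  obtain ⟨w, hw⟩ := Ideal.mem_jacobson_iff.mp hj (-z)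
  rw [Ideal.mem_bot] at hz hw
  have hzj : z * (1 + j) = 1 := by rw [← sub_eq_zero, ← hz]; noncomm_ring
  -- `z = 1 - z * j` has the left inverse `w`, so `1 + j` is its two-sided inverse
  have hz1 : 1 - z * j = z := by rw [← hzj]; noncomm_ring
  have hwz : w * z = 1 :=
    calc w * z = w * (1 - z * j) := by rw [hz1]
      _ = 1 := by rw [← sub_eq_zero, ← hw]; noncomm_ring
  have hw1 : w = 1 + j := left_inv_eq_right_inv hwz hzj
  exact isUnit_iff_exists.mpr ⟨z, hw1 ▸ hwz, hzj⟩

theorem mem_jacobson_iff_forall_isUnit_one_sub_mul {x : R} :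
    x ∈ jacobson R ↔ ∀ y, IsUnit (1 - y * x) := by
  refine ⟨fun hx y => ?_, fun hx => ?_⟩
  · rw [sub_eq_add_neg, ← neg_mul]
    exact isUnit_one_add_of_mem_jacobson ((jacobson R).mul_mem_left _ hx)
  · rw [← Ideal.jacobson_bot, Ideal.mem_jacobson_iff]
    intro y
    obtain ⟨u, hu⟩ := hx (-y)
    refine ⟨↑u⁻¹, ?_⟩
    have hyx : y * x + 1 = u := by rw [hu]; noncomm_ring
    rw [Ideal.mem_bot, sub_eq_zero, mul_assoc, ← mul_add_one, hyx, Units.inv_mul]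

instance isLocalHom_quotient_mk_jacobson : IsLocalHom (Ideal.Quotient.mk (jacobson R)) := by
  refine ⟨fun x hx => ?_⟩
  obtain ⟨y, hy⟩ := Ideal.Quotient.mk_surjective (↑hx.unit⁻¹ : R ⧸ jacobson R)
  have isUnit_of_mk_eq_one {z : R} (hz : Ideal.Quotient.mk (jacobson R) z = 1) : IsUnit z := by
    rw [← map_one (Ideal.Quotient.mk (jacobson R)), Ideal.Quotient.eq] at hz
    simpa using isUnit_one_add_of_mem_jacobson hz
  have hxy : IsUnit (x * y) := isUnit_of_mk_eq_one (by rw [map_mul, hy]; exact hx.mul_val_inv)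
  have hyx : IsUnit (y * x) := isUnit_of_mk_eq_one (by rw [map_mul, hy]; exact hx.val_inv_mul)
  exact isUnit_iff_exists_and_exists.mpr
    ⟨⟨y * ↑hxy.unit⁻¹, by rw [← mul_assoc, hxy.mul_val_inv]⟩,
      ⟨↑hyx.unit⁻¹ * y, by rw [mul_assoc, hyx.val_inv_mul]⟩⟩

end Ring

section UnitRegular

variable {R : Type*} [Ring R]

theorem IsIdempotentElem.mul_one_add_mul_sub_one {q s t : R} (hq : IsIdempotentElem q)
    (hqs : Commute q s) (hst : s * t = 1) : (1 + q * (s - 1)) * (1 + q * (t - 1)) = 1 := by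
  have hqsq : q * (s - 1) * q = q * (s - 1) := by
    rw [mul_assoc, ← (hqs.sub_right (Commute.one_right q)).eq, ← mul_assoc, hq.eq]
  calc (1 + q * (s - 1)) * (1 + q * (t - 1))
      = 1 + q * (s - 1) + q * (t - 1) + q * (s - 1) * q * (t - 1) := by noncomm_ring
    _ = 1 + q * (s * t - 1) := by rw [hqsq]; noncomm_ring
    _ = 1 := by rw [hst, sub_self, mul_zero, add_zero]

theorem IsIdempotentElem.isUnit_one_add_mul_sub_one {q s : R} (hq : IsIdempotentElem q)
    (hs : IsUnit s) (hqs : Commute q s) : IsUnit (1 + q * (s - 1)) := by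
  obtain ⟨u, rfl⟩ := hs
  exact isUnit_iff_exists.mpr ⟨1 + q * (↑u⁻¹ - 1), hq.mul_one_add_mul_sub_one hqs u.mul_inv,
    hq.mul_one_add_mul_sub_one hqs.units_inv_right u.inv_mul⟩

theorem IsIdempotentElem.isUnit_one_add_one_sub_mul_mul_s4 {p : R} (hp : IsIdempotentElem p)
    (x : R) : IsUnit (1 + (1 - p) * x * p) := by
  refine IsNilpotent.isUnit_one_add ⟨2, ?_⟩
  have hpp : p * (1 - p) = 0 := by rw [mul_sub, mul_one, hp.eq, sub_self]
  rw [pow_two, show (1 - p) * x * p * ((1 - p) * x * p) = (1 - p) * x * (p * (1 - p)) * x * p by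
    noncomm_ring, hpp, mul_zero, zero_mul, zero_mul]

theorem IsIdempotentElem.isUnit_one_add_mul_mul_one_sub_s4 {p : R} (hp : IsIdempotentElem p)
    (x : R) : IsUnit (1 + p * x * (1 - p)) := by
  simpa using hp.one_sub.isUnit_one_add_one_sub_mul_mul_s4 x

theorem isUnit_add_mul_inv_mul_of_mul_mul_eq {b s : R} (v : Rˣ) (hb : b * v * b = b)
    (hs : IsUnit s) (hbs : Commute (v * b) s) :
    IsUnit (b + (1 - b * v) * ↑v⁻¹ * (1 - v * b) * s) := by
  have hvb : IsIdempotentElem (v * b) := by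
    rw [IsIdempotentElem, mul_assoc, ← mul_assoc b, hb]
  rw [← Units.isUnit_units_mul v]
  convert hvb.one_sub.isUnit_one_add_mul_sub_one hs ((Commute.one_left s).sub_left hbs) using 1
  calc (v : R) * (b + (1 - b * v) * ↑v⁻¹ * (1 - v * b) * s)
      = v * b + (1 - v * b) * (1 - v * b) * s := by
        rw [mul_add]; congr 1
        calc (v : R) * ((1 - b * v) * ↑v⁻¹ * (1 - v * b) * s)
            = (v * ↑v⁻¹ - v * b * (v * ↑v⁻¹)) * (1 - v * b) * s := by noncomm_ring
          _ = _ := by rw [Units.mul_inv, mul_one]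
    _ = 1 + (1 - v * b) * (s - 1) := by rw [hvb.one_sub.eq]; noncomm_ring

theorem isUnit_add_mul_mul_mul_of_mul_mul_eq {a b c e f g h s : R} (v : Rˣ)
    (hb : b * v * b = b) (hef : a * e + b * f = 1) (hgh : g * b + h * c = 1)
    (hs : IsUnit s) (hsc : s ∈ Set.center R) :
    IsUnit (b + a * (e * (1 - b * v) * ↑v⁻¹ * (1 - v * b) * h) * s * c) := by
  rw [Semigroup.mem_center_iff] at hsc
  set n := 1 - b * v
  set q := 1 - v * b
  have hn : IsIdempotentElem n := IsIdempotentElem.one_sub (by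
    rw [IsIdempotentElem, ← mul_assoc, hb])
  have hq : IsIdempotentElem q := IsIdempotentElem.one_sub (by
    rw [IsIdempotentElem, mul_assoc, ← mul_assoc b, hb])
  have hnb : n * b = 0 := by rw [sub_mul, one_mul, hb, sub_self]
  have hbq : b * q = 0 := by rw [mul_sub, mul_one, ← mul_assoc, hb, sub_self]
  have hnae : n * (a * e) = n := by
    rw [eq_sub_of_add_eq hef, mul_sub, mul_one, ← mul_assoc, hnb, zero_mul, sub_zero]
  have hhcq : h * c * q = q := by
    rw [eq_sub_of_add_eq' hgh, sub_mul, one_mul, mul_assoc, hbq, mul_zero, sub_zero]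
  set U := 1 + (1 - n) * (a * e) * n
  set V := 1 + q * (h * c) * (1 - q)
  have hUn : U * n = a * e * n :=
    calc U * n = n + (1 - n) * (a * e) * (n * n) := by simp only [U]; noncomm_ring
      _ = n * (a * e) * n + (1 - n) * (a * e) * n := by rw [hnae, hn.eq]
      _ = a * e * n := by noncomm_ring
  have hqV : q * V = q * (h * c) :=
    calc q * V = q + (q * q) * (h * c) * (1 - q) := by simp only [V]; noncomm_ring
      _ = q + q * (h * c) - q * (h * c * q) := by rw [hq.eq]; noncomm_ring
      _ = q * (h * c) := by rw [hhcq, hq.eq]; noncomm_ring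
  have hUb : U * b = b := by rw [add_mul, one_mul, mul_assoc, hnb, mul_zero, add_zero]
  have hbV : b * V = b := by
    rw [mul_add, mul_one, ← mul_assoc, ← mul_assoc, hbq, zero_mul, zero_mul, add_zero]
  have hfactor : b + a * (e * n * ↑v⁻¹ * q * h) * s * c = U * (b + n * ↑v⁻¹ * q * s) * V :=
    calc b + a * (e * n * ↑v⁻¹ * q * h) * s * c
        = U * b * V + (U * n) * ↑v⁻¹ * (q * V) * s := by
          rw [hUb, hbV, hUn, hqV, mul_assoc _ s c, ← hsc c]; noncomm_ring
      _ = U * b * V + U * n * ↑v⁻¹ * q * (s * V) := by rw [← hsc V]; noncomm_ring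
      _ = U * (b + n * ↑v⁻¹ * q * s) * V := by noncomm_ring
  rw [hfactor]
  exact ((hn.isUnit_one_add_one_sub_mul_mul_s4 _).mul
    (isUnit_add_mul_inv_mul_of_mul_mul_eq v hb hs (hsc _))).mul
    (hq.isUnit_one_add_mul_mul_one_sub_s4 _)

end UnitRegular

/-- Lemma 4.1: if E/Jac(E) is unit-regular and aE + bE = E = Eb + Ec, then there is
d ∈ E such that b + a*d*s*c is a unit for every central unit s of E.  Unit-regularity
modulo the Jacobson radical is phrased via the standard membership criterion:
x ∈ Jac(E) iff 1 - y*x is a unit for every y. -/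
theorem unitRegular_mod_jacobson_unit_perturbation (E : Type*) [Ring E]
    (hur : ∀ x : E, ∃ v : Eˣ, ∀ y : E, IsUnit (1 - y * (x - x * ↑v * x)))
    (a b c : E)
    (h1 : ∃ e f : E, a * e + b * f = 1)
    (h2 : ∃ g h : E, g * b + h * c = 1) :
    ∃ d : E, ∀ s : E, IsUnit s → s ∈ Set.center E → IsUnit (b + a * d * s * c) := by
  obtain ⟨e, f, hef⟩ := h1
  obtain ⟨g, h, hgh⟩ := h2
  obtain ⟨v, hv⟩ := hur b
  refine ⟨e * (1 - b * v) * ↑v⁻¹ * (1 - v * b) * h, fun s hs hsc => ?_⟩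
  set π := Ideal.Quotient.mk (Ring.jacobson E)
  have hb : π b * ↑(Units.map (π : E →* E ⧸ Ring.jacobson E) v) * π b = π b := by
    rw [Units.coe_map, MonoidHom.coe_coe, ← map_mul, ← map_mul]
    exact (Ideal.Quotient.eq.mpr (Ring.mem_jacobson_iff_forall_isUnit_one_sub_mul.mpr hv)).symm
  apply IsUnit.of_map π
  simpa using isUnit_add_mul_mul_mul_of_mul_mul_eq _ hb
    (by simpa using congr_arg π hef) (by simpa using congr_arg π hgh) (hs.map π)
    (map_mem_center_of_surjective Ideal.Quotient.mk_surjective hsc)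
end

section
/- Let M and N be right modules over a ring S with E := End_S(N) of stable rank 1. Let (e, f) : N ⊕ M → N be a split surjection (e ∈ E, f ∈ Hom_S(M,N)), and suppose there is a split surjection h ∈ Hom_S(M,N). Then there exists z ∈ Hom_S(N, M) such that eE + (f∘z)E = E and E(h∘z) = E. -/
/-!
Put `F := f ∘ r` and `H := h ∘ q` in `E`, where `h ∘ r = 1` and `e p + f q = 1`. Since
`H F + (1 - H F) = 1`, stable rank one gives `c` with `F + c (1 - H F)` a unit, and a
Jacobson-type identity turns this into a right inverse `w` of `F + (1 - F H) c`. The section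
`z := (q - r h q) c + r` of `h` then satisfies `f z = F + (1 - F H) c - e p c`, so
`e (p c w) + (f z) w = 1`.
-/

def StableRankOne (R : Type*) [Ring R] : Prop :=
  ∀ a b : R, (∃ x y : R, x * a + y * b = 1) → ∃ c : R, IsUnit (a + c * b)

section StableRankOne

variable {R : Type*} [Ring R]

theorem mul_eq_one_of_add_mul_one_sub_mul_mul_eq_one {F H c v : R}
    (hv : (F + c * (1 - H * F)) * v = 1) :
    (F + (1 - F * H) * c) * (H + (1 - H * F) * v * (1 - c * H)) = 1 := by
  have hswap : (F + (1 - F * H) * c) * (1 - H * F) = (1 - F * H) * (F + c * (1 - H * F)) := by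
    noncomm_ring
  calc (F + (1 - F * H) * c) * (H + (1 - H * F) * v * (1 - c * H))
      = (F + (1 - F * H) * c) * H
          + (F + (1 - F * H) * c) * (1 - H * F) * v * (1 - c * H) := by noncomm_ring
    _ = (F + (1 - F * H) * c) * H + (1 - F * H) * ((F + c * (1 - H * F)) * v) * (1 - c * H) := by
          rw [hswap]; noncomm_ring
    _ = 1 := by rw [hv]; noncomm_ring

theorem StableRankOne.exists_add_one_sub_mul_mul_mul_eq_one (hR : StableRankOne R) (F H : R) :
    ∃ c w : R, (F + (1 - F * H) * c) * w = 1 := by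
  obtain ⟨c, u, hu⟩ := hR F (1 - H * F) ⟨H, 1, by noncomm_ring⟩
  exact ⟨c, _, mul_eq_one_of_add_mul_one_sub_mul_mul_eq_one (v := ↑u⁻¹) (hu ▸ u.mul_inv)⟩

end StableRankOne

/-- Lemma 4.3: if (e,f) : N ⊕ M → N is a split surjection and Hom_S(M,N) contains a
split surjection h, then there is z : N → M with eE + (f∘z)E = E and E(h∘z) = E. -/
theorem special_section (S : Type*) [Ring S]
    (M N : Type*) [AddCommGroup M] [Module S M] [AddCommGroup N] [Module S N]
    (hsr1 : ∀ a b : Module.End S N, (∃ x y : Module.End S N, x * a + y * b = 1) →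
      ∃ c : Module.End S N, IsUnit (a + c * b))
    (e : Module.End S N) (f : M →ₗ[S] N)
    (hef : ∃ (p : Module.End S N) (q : N →ₗ[S] M), e ∘ₗ p + f ∘ₗ q = LinearMap.id)
    (h : M →ₗ[S] N) (hh : ∃ r : N →ₗ[S] M, h ∘ₗ r = LinearMap.id) :
    ∃ z : N →ₗ[S] M,
      (∃ a b : Module.End S N, e ∘ₗ a + (f ∘ₗ z) ∘ₗ b = LinearMap.id) ∧
      (∃ c : Module.End S N, c ∘ₗ (h ∘ₗ z) = LinearMap.id) := by
  obtain ⟨p, q, hpq⟩ := hef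
  obtain ⟨r, hr⟩ := hh
  obtain ⟨c, w, hw⟩ := StableRankOne.exists_add_one_sub_mul_mul_mul_eq_one hsr1 (f ∘ₗ r) (h ∘ₗ q)
  let z := (q - r ∘ₗ h ∘ₗ q) ∘ₗ c + r
  have hz : h ∘ₗ z = LinearMap.id := by
    simp only [z, LinearMap.comp_add, LinearMap.comp_sub, ← LinearMap.comp_assoc, hr,
      LinearMap.id_comp, sub_self, LinearMap.zero_comp, zero_add]
  have hfq : f ∘ₗ q = 1 - e * p := eq_sub_of_add_eq' hpq
  have hfz : f ∘ₗ z = (f ∘ₗ q - f ∘ₗ r * h ∘ₗ q) * c + f ∘ₗ r := by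
    simp only [z, LinearMap.comp_add, LinearMap.comp_sub, ← LinearMap.comp_assoc]
    rfl
  refine ⟨z, ⟨p * c * w, w, ?_⟩, ⟨1, by rw [hz]; rfl⟩⟩
  calc e * (p * c * w) + f ∘ₗ z * w
      = (f ∘ₗ r + (1 - f ∘ₗ r * h ∘ₗ q) * c) * w := by rw [hfz, hfq]; noncomm_ring
    _ = 1 := hw
end

section
/- Let M, N be right S-modules with E = End_S(N) of stable rank 1, let x, y ∈ Hom_S(M, N) be split surjections with sections p and q respectively (x∘p = id_N = y∘q). Then there exists a unit φ of End_S(M) with x ∘ φ = y. -/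
/-!
The elements `a := x ∘ q` and `b := y ∘ (1 - p ∘ x) ∘ q` of `End N` satisfy `(y ∘ p) ∘ a + b = 1`,
so stable rank 1 gives `c` with `a + c ∘ b` a unit. Three units of `End M` then carry `x` to `y`:
the square-zero transvection `1 + p ∘ c ∘ y ∘ (1 - p ∘ x)` turns `x` into `x + c ∘ y ∘ (1 - p ∘ x)`,
whose composite with `q` is the unit `a + c ∘ b`; the automorphism acting on `q(N)` by the inverse
of that unit (and trivially on `ker y`) turns it into some `x'` with `x' ∘ q = 1`; finally the
square-zero transvection `1 + q ∘ (y - x')` carries `x'` to `y`.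
-/

namespace LinearMap

variable {R M N : Type*} [Semiring R] [AddCommGroup M] [Module R M] [AddCommGroup N] [Module R N]

theorem exists_unit_comp_eq_add {x z : M →ₗ[R] N} {p : N →ₗ[R] M}
    (hx : x ∘ₗ p = id) (hz : z ∘ₗ p = 0) :
    ∃ φ : (Module.End R M)ˣ, x ∘ₗ (φ : Module.End R M) = x + z := by
  have hnil : IsNilpotent (p ∘ₗ z) :=
    ⟨2, by rw [pow_two, Module.End.mul_eq_comp, comp_assoc, ← comp_assoc z, hz]; simp⟩
  refine ⟨hnil.isUnit_one_add.unit, ?_⟩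
  rw [IsUnit.unit_spec, Module.End.one_eq_id, comp_add, comp_id, ← comp_assoc, hx, id_comp]

theorem exists_unit_comp_eq_of_comp_eq_id {x y : M →ₗ[R] N} {q : N →ₗ[R] M}
    (hx : x ∘ₗ q = id) (hy : y ∘ₗ q = id) :
    ∃ φ : (Module.End R M)ˣ, x ∘ₗ (φ : Module.End R M) = y := by
  obtain ⟨φ, hφ⟩ := exists_unit_comp_eq_add (z := y - x) hx (by rw [sub_comp, hx, hy, sub_self])
  exact ⟨φ, by rw [hφ, add_sub_cancel]⟩

/-- Along `M = q(N) ⊕ ker y`, `endExtend y q hy s` acts as `s` on `q(N) ≅ N` and as the identity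
on `ker y`. -/
def endExtend (y : M →ₗ[R] N) (q : N →ₗ[R] M) (hy : y ∘ₗ q = id) :
    Module.End R N →* Module.End R M where
  toFun s := 1 + q ∘ₗ (s - 1) ∘ₗ y
  map_one' := by simp
  map_mul' s t := by
    have hy' (n : N) : y (q n) = n := congr($hy n)
    ext m
    simp only [add_apply, Module.End.one_apply, coe_comp, Function.comp_apply, sub_apply,
      Module.End.mul_apply, map_sub, map_add, hy', add_sub_cancel]
    abel

theorem endExtend_comp {y : M →ₗ[R] N} {q : N →ₗ[R] M} (hy : y ∘ₗ q = id) (s : Module.End R N) :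
    endExtend y q hy s ∘ₗ q = q ∘ₗ s := by
  have hy' (n : N) : y (q n) = n := congr($hy n)
  ext n
  simp [endExtend, hy', map_sub]

theorem exists_unit_comp_eq_of_isUnit_comp {x y : M →ₗ[R] N} {q : N →ₗ[R] M}
    (hy : y ∘ₗ q = id) (hxq : IsUnit (x ∘ₗ q : Module.End R N)) :
    ∃ φ : (Module.End R M)ˣ, x ∘ₗ (φ : Module.End R M) = y := by
  set r := Units.map (endExtend y q hy) hxq.unit⁻¹
  have hr : (x ∘ₗ (r : Module.End R M)) ∘ₗ q = id := by
    rw [comp_assoc, Units.coe_map, endExtend_comp, ← comp_assoc,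
      ← Module.End.mul_eq_comp, hxq.mul_val_inv, Module.End.one_eq_id]
  obtain ⟨w, hw⟩ := exists_unit_comp_eq_of_comp_eq_id hr hy
  exact ⟨r * w, by rw [Units.val_mul, Module.End.mul_eq_comp, ← comp_assoc, hw]⟩

end LinearMap

open LinearMap in
/-- Transitivity step: if End_S(N) has stable rank 1 and x, y : M → N are split
surjections, then there is a unit φ of End_S(M) with x ∘ φ = y. -/
theorem split_surjections_transitive (S : Type*) [Ring S]
    (M N : Type*) [AddCommGroup M] [Module S M] [AddCommGroup N] [Module S N]
    (hsr1 : ∀ a b : Module.End S N, (∃ x y : Module.End S N, x * a + y * b = 1) →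
      ∃ c : Module.End S N, IsUnit (a + c * b))
    (x y : M →ₗ[S] N) (p q : N →ₗ[S] M)
    (hx : x ∘ₗ p = LinearMap.id) (hy : y ∘ₗ q = LinearMap.id) :
    ∃ φ : (Module.End S M)ˣ, x ∘ₗ (↑φ : Module.End S M) = y := by
  have hx' (n : N) : x (p n) = n := congr($hx n)
  have hy' (n : N) : y (q n) = n := congr($hy n)
  set π : Module.End S M := 1 - p ∘ₗ x
  obtain ⟨c, hc⟩ := hsr1 (x ∘ₗ q) (y ∘ₗ π ∘ₗ q) ⟨y ∘ₗ p, 1, by ext n; simp [π, hy', map_sub]⟩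
  obtain ⟨g, hg⟩ := exists_unit_comp_eq_add (z := c ∘ₗ y ∘ₗ π) hx (by ext n; simp [π, hx'])
  have hgq : IsUnit ((x ∘ₗ (g : Module.End S M)) ∘ₗ q : Module.End S N) := by
    rw [hg, add_comp]
    exact hc
  obtain ⟨w, hw⟩ := exists_unit_comp_eq_of_isUnit_comp hy hgq
  exact ⟨g * w, by rw [Units.val_mul, Module.End.mul_eq_comp, ← comp_assoc, hw]⟩
end

section
/- Let M, N be right S-modules, E = End_S(N) of stable rank 1, and (f_1, ..., f_n)^T ∈ Hom_S(M, N^{⊕n}) for some n ≥ 2. Suppose there is C ∈ M_{m×n}(E) with C·(f_1,...,f_n)^T split surjective for some m ∈ {2,...,n}. Let U ∈ GL_n(E) and (g_1,...,g_n)^T := U·(f_1,...,f_n)^T, and let k ∈ {1,...,m−1}. Then there is a matrix B ∈ M_{(m−k)×(n−k)}(E) such that B·(g_1,...,g_{n−k})^T is split surjective (i.e., δ(Eg_1 + ... + Eg_{n−k}) ≥ m − k). -/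
/-!
Since `f = V g`, every `E`-combination of the `fⱼ` is one of the `gⱼ`, so `δ(g) ≥ m`, and it
suffices to drop the last map at the cost of one. Let `hᵢ = ∑ⱼ Bᵢⱼ gⱼ` (`0 ≤ i ≤ m`) have a
section `z`, and put `a = g_last z₀`, `b = B₀,last`. The pair `(a, 1 - b a)` is unimodular, so
stable rank one gives `τ` with `a + τ (1 - b a)` a unit; this is `ψ z₀` for
`ψ = g_last + τ h₀'`, where `h₀'` is `h₀` without its `g_last` term. Subtracting
`Bᵢ,last ψ` from `hᵢ` (`i ≥ 1`) eliminates `g_last`, and the resulting `m` maps are still split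
surjective once the `z_l` are corrected along `z₀` into `ker ψ`.
-/

variable {S : Type*} [Ring S] {M N : Type*}
  [AddCommGroup M] [Module S M] [AddCommGroup N] [Module S N]

/-- A column of maps (f₁,…,fₘ)ᵀ : M → N^{⊕m} is a split surjection: it has a
componentwise S-linear section. -/
def IsSplitSurjCol {m : ℕ} (f : Fin m → (M →ₗ[S] N)) : Prop :=
  ∃ z : Fin m → (N →ₗ[S] M), ∀ i j : Fin m,
    f i ∘ₗ z j = if i = j then LinearMap.id else 0

def HasStableRankOne (R : Type*) [Ring R] : Prop :=
  ∀ a b : R, (∃ x y : R, x * a + y * b = 1) → ∃ c : R, IsUnit (a + c * b)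

/-- `δ(E g₁ + ⋯ + E gₙ) ≥ m`, where `E = End_S N`. -/
def HasSplitSurjComb {ι : Type*} [Fintype ι] (m : ℕ) (g : ι → (M →ₗ[S] N)) : Prop :=
  ∃ B : Fin m → ι → Module.End S N, IsSplitSurjCol (fun i => ∑ j, B i j ∘ₗ g j)

theorem sum_comp_sum_comp {κ ι : Type*} [Fintype κ] [Fintype ι] (a : κ → Module.End S N)
    (A : κ → ι → Module.End S N) (g : ι → (M →ₗ[S] N)) :
    ∑ j, a j ∘ₗ ∑ l, A j l ∘ₗ g l = ∑ l, (∑ j, a j * A j l) ∘ₗ g l := by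
  ext x
  simp only [LinearMap.sum_apply, LinearMap.comp_apply, map_sum, Module.End.mul_apply]
  exact Finset.sum_comm

theorem HasSplitSurjComb.of_eq_sum {ι κ : Type*} [Fintype ι] [Fintype κ] {m : ℕ}
    {f : κ → (M →ₗ[S] N)} {g : ι → (M →ₗ[S] N)} (V : κ → ι → Module.End S N)
    (hf : ∀ j, f j = ∑ l, V j l ∘ₗ g l) (h : HasSplitSurjComb m f) :
    HasSplitSurjComb m g := by
  obtain ⟨C, hC⟩ := h
  refine ⟨fun i l => ∑ j, C i j * V j l, ?_⟩
  simpa only [hf, sum_comp_sum_comp] using hC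

theorem isSplitSurjCol_succ_sub {m : ℕ} {h : Fin (m + 1) → (M →ₗ[S] N)}
    {z : Fin (m + 1) → (N →ₗ[S] M)} (hz : ∀ i j, h i ∘ₗ z j = if i = j then LinearMap.id else 0)
    (ψ : M →ₗ[S] N) (hψ : IsUnit (ψ ∘ₗ z 0 : Module.End S N)) (c : Fin m → Module.End S N) :
    IsSplitSurjCol (fun i => h i.succ - c i ∘ₗ ψ) := by
  obtain ⟨u, hu⟩ := hψ
  set v : Module.End S N := ↑u⁻¹
  have hv : ψ ∘ₗ z 0 ∘ₗ v = LinearMap.id := by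
    rw [← LinearMap.comp_assoc, ← hu]; exact u.mul_inv
  refine ⟨fun l => z l.succ - z 0 ∘ₗ v ∘ₗ ψ ∘ₗ z l.succ, fun i l => ?_⟩
  have hc : ((c i ∘ₗ ψ) ∘ₗ z 0) ∘ₗ v = c i := by
    rw [LinearMap.comp_assoc, LinearMap.comp_assoc, hv, LinearMap.comp_id]
  simp only [LinearMap.sub_comp, LinearMap.comp_sub, ← LinearMap.comp_assoc, hz,
    Fin.succ_ne_zero, if_false, LinearMap.zero_comp, Fin.succ_inj, hc]
  abel

theorem HasSplitSurjComb.castSucc (hsr : HasStableRankOne (Module.End S N)) {n m : ℕ}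
    {g : Fin (n + 1) → (M →ₗ[S] N)} (h : HasSplitSurjComb (m + 1) g) :
    HasSplitSurjComb m (fun j : Fin n => g j.castSucc) := by
  obtain ⟨B, z, hz⟩ := h
  set b : Module.End S N := B 0 (Fin.last n)
  set a : Module.End S N := g (Fin.last n) ∘ₗ z 0
  set h₀ : M →ₗ[S] N := ∑ j : Fin n, B 0 j.castSucc ∘ₗ g j.castSucc
  have hh₀ : h₀ ∘ₗ z 0 = 1 - b * a := by
    have h00 := hz 0 0
    beta_reduce at h00
    rw [Fin.sum_univ_castSucc, LinearMap.add_comp, if_pos rfl] at h00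
    rw [Module.End.one_eq_id, ← h00, Module.End.mul_eq_comp, LinearMap.comp_assoc,
      add_sub_cancel_right]
  obtain ⟨τ, hτ⟩ := hsr a (1 - b * a) ⟨b, 1, by noncomm_ring⟩
  have hψ : IsUnit ((g (Fin.last n) + τ ∘ₗ h₀) ∘ₗ z 0 : Module.End S N) := by
    rwa [LinearMap.add_comp, LinearMap.comp_assoc, hh₀]
  refine ⟨fun i j => B i.succ j.castSucc - B i.succ (Fin.last n) * τ * B 0 j.castSucc,
    ?_⟩
  convert isSplitSurjCol_succ_sub hz _ hψ (fun i => B i.succ (Fin.last n)) using 2 with i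
  ext x
  simp only [h₀, Fin.sum_univ_castSucc, LinearMap.sum_apply, LinearMap.sub_apply,
    LinearMap.add_apply, LinearMap.comp_apply, Module.End.mul_apply, map_add, map_sum,
    Finset.sum_sub_distrib]
  abel

theorem HasSplitSurjComb.zero {ι : Type*} [Fintype ι] (g : ι → (M →ₗ[S] N)) :
    HasSplitSurjComb 0 g :=
  ⟨finZeroElim, finZeroElim, finZeroElim⟩

theorem HasSplitSurjComb.castLE_pred (hsr : HasStableRankOne (Module.End S N)) {n m : ℕ}
    (hn : 0 < n) {g : Fin n → (M →ₗ[S] N)} (h : HasSplitSurjComb m g) :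
    HasSplitSurjComb (m - 1) (fun j : Fin (n - 1) => g (Fin.castLE (n.sub_le 1) j)) := by
  obtain ⟨n, rfl⟩ := Nat.exists_eq_add_of_lt hn
  cases m with
  | zero => exact .zero _
  | succ m => exact h.castSucc hsr

theorem HasSplitSurjComb.castLE (hsr : HasStableRankOne (Module.End S N)) {n m k : ℕ}
    (hk : k ≤ n) {g : Fin n → (M →ₗ[S] N)} (h : HasSplitSurjComb m g) :
    HasSplitSurjComb (m - k) (fun j : Fin (n - k) => g (Fin.castLE (n.sub_le k) j)) := by
  induction k with
  | zero => exact h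
  | succ k ih => exact (ih (by omega)).castLE_pred hsr (by omega)

/-- Lemma 3.4: if sr(End_S N) = 1, δ(Ef₁ + ⋯ + Efₙ) ≥ m, and
(g₁,…,gₙ)ᵀ = U·(f₁,…,fₙ)ᵀ for U ∈ GL_n(E), then for 1 ≤ k ≤ m − 1 we have
δ(Eg₁ + ⋯ + Eg_{n−k}) ≥ m − k. -/
theorem delta_after_unit_truncation (hsr1 : ∀ a b : Module.End S N,
      (∃ x y : Module.End S N, x * a + y * b = 1) →
      ∃ c : Module.End S N, IsUnit (a + c * b))
    (n m k : ℕ) (hmn : m ≤ n) (hkm : k ≤ m - 1)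
    (f : Fin n → (M →ₗ[S] N))
    (C : Fin m → Fin n → Module.End S N)
    (hC : IsSplitSurjCol (fun i => ∑ j, C i j ∘ₗ f j))
    (U V : Fin n → Fin n → Module.End S N)
    (hVU : ∀ i l : Fin n, ∑ j, V i j * U j l = if i = l then 1 else 0)
    (g : Fin n → (M →ₗ[S] N)) (hg : ∀ i, g i = ∑ j, U i j ∘ₗ f j) :
    ∃ B : Fin (m - k) → Fin (n - k) → Module.End S N,
      IsSplitSurjCol (fun i => ∑ j, B i j ∘ₗ g (Fin.castLE (by omega) j)) := by
  have hf : ∀ j, f j = ∑ l, V j l ∘ₗ g l := fun j => by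
    simp only [hg, sum_comp_sum_comp, hVU]
    rw [Fintype.sum_eq_single j fun l hl => by rw [if_neg hl.symm, LinearMap.zero_comp],
      if_pos rfl, Module.End.one_eq_id, LinearMap.id_comp]
  exact (HasSplitSurjComb.of_eq_sum V hf ⟨C, hC⟩).castLE hsr1 (by omega)
end

section
/- Let N, L, M be right S-modules with E := End_S(N) and suppose N ⊕ L ≅ N ⊕ M via an isomorphism whose first row is (e, f_1) : N ⊕ M → N. If there exists f_0 ∈ Hom_S(M, N) such that f_1 + e∘f_0 is a split surjection M → N, then L ≅ M. -/
/-!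
Writing `ρ := fst ∘ φ = [e f₁] : N × M → N`, precompose `φ` with elementary (shear) automorphisms
of `N × M`; each one acts on the row `ρ` by a column operation. With `h := f₁ + e f₀` and `h g = 1`:
`[e f₁] ↦ [e h] ↦ [e + h (g - g e)  h] = [1 h] ↦ [1 0]`.
An automorphism of `N × M` followed by `φ` whose first row is `[1 0]` maps `0 × M` onto `0 × L`.
-/

namespace LinearEquiv

variable {R N M L P : Type*} [Ring R] [AddCommGroup N] [Module R N] [AddCommGroup M] [Module R M]
  [AddCommGroup L] [Module R L] [AddCommGroup P] [Module R P]

def shearFst (f : M →ₗ[R] N) : (N × M) ≃ₗ[R] N × M :=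
  (LinearEquiv.prodComm R N M).trans
    (((LinearEquiv.refl R M).skewProd (LinearEquiv.refl R N) f).trans (LinearEquiv.prodComm R M N))

def shearSnd (k : N →ₗ[R] M) : (N × M) ≃ₗ[R] N × M :=
  (LinearEquiv.refl R N).skewProd (LinearEquiv.refl R M) k

@[simp]
theorem shearFst_apply (f : M →ₗ[R] N) (x : N × M) : shearFst f x = (x.1 + f x.2, x.2) := rfl

@[simp]
theorem shearSnd_apply (k : N →ₗ[R] M) (x : N × M) : shearSnd k x = (x.1, x.2 + k x.1) := rfl

theorem coprod_comp_shearFst (a : N →ₗ[R] P) (b : M →ₗ[R] P) (f : M →ₗ[R] N) :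
    a.coprod b ∘ₗ (shearFst f).toLinearMap = a.coprod (b + a ∘ₗ f) := by
  ext x <;> simp [add_comm]

theorem coprod_comp_shearSnd (a : N →ₗ[R] P) (b : M →ₗ[R] P) (k : N →ₗ[R] M) :
    a.coprod b ∘ₗ (shearSnd k).toLinearMap = (a + b ∘ₗ k).coprod b := by
  ext x <;> simp

def prodCancelLeft (ψ : (N × M) ≃ₗ[R] N × L)
    (hψ : LinearMap.fst R N L ∘ₗ ψ.toLinearMap = LinearMap.fst R N M) : M ≃ₗ[R] L :=
  (Submodule.sndEquiv R N M).symm ≪≫ₗ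
    ψ.ofSubmodules _ _ (by
      have hsymm : LinearMap.fst R N M ∘ₗ ψ.symm.toLinearMap = LinearMap.fst R N L := by
        rw [← hψ, LinearMap.comp_assoc, ψ.comp_symm, LinearMap.comp_id]
      rw [Submodule.map_equiv_eq_comap_symm, Submodule.snd, Submodule.snd,
        ← Submodule.comap_comp, hsymm]) ≪≫ₗ
    Submodule.sndEquiv R N L

end LinearEquiv

open LinearEquiv in
/-- Final step of the Main Theorem: if φ : N ⊕ L ≅ N ⊕ M has first row (e, f₁)
and f₁ + e∘f₀ is a split surjection for some f₀ : M → N, then L ≅ M. -/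
theorem cancel_of_split_perturbation (S : Type*) [Ring S]
    (N L M : Type*) [AddCommGroup N] [Module S N] [AddCommGroup L] [Module S L]
    [AddCommGroup M] [Module S M]
    (e : Module.End S N) (f₁ : M →ₗ[S] N)
    (φ : (N × M) ≃ₗ[S] (N × L))
    (hrow : ∀ (n : N) (m : M), (φ (n, m)).1 = e n + f₁ m)
    (hsplit : ∃ f₀ : M →ₗ[S] N, ∃ g : N →ₗ[S] M,
      (f₁ + e ∘ₗ f₀) ∘ₗ g = LinearMap.id) :
    Nonempty (L ≃ₗ[S] M) := by
  obtain ⟨f₀, g, hg⟩ := hsplit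
  set h := f₁ + e ∘ₗ f₀
  have hφ : LinearMap.fst S N L ∘ₗ φ.toLinearMap = e.coprod f₁ := by
    ext x <;> simp [hrow]
  have hU : LinearMap.fst S N L ∘ₗ
      (((shearFst (-h)).trans (shearSnd (g - g ∘ₗ e))).trans ((shearFst f₀).trans φ)).toLinearMap =
      LinearMap.fst S N M :=
    calc _ = e.coprod f₁ ∘ₗ (shearFst f₀).toLinearMap ∘ₗ (shearSnd (g - g ∘ₗ e)).toLinearMap ∘ₗ
          (shearFst (-h)).toLinearMap := by rw [← hφ]; rfl
      _ = e.coprod h ∘ₗ (shearSnd (g - g ∘ₗ e)).toLinearMap ∘ₗ (shearFst (-h)).toLinearMap := by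
          rw [← LinearMap.comp_assoc, coprod_comp_shearFst]
      _ = LinearMap.id.coprod h ∘ₗ (shearFst (-h)).toLinearMap := by
          rw [← LinearMap.comp_assoc, coprod_comp_shearSnd, LinearMap.comp_sub,
            ← LinearMap.comp_assoc, hg, LinearMap.id_comp, add_sub_cancel]
      _ = LinearMap.fst S N M := by
          rw [coprod_comp_shearFst, LinearMap.comp_neg, LinearMap.id_comp, add_neg_cancel,
            LinearMap.fst_eq_coprod]
  exact ⟨(prodCancelLeft _ hU).symm⟩
end
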